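/- arXiv:1608.01551 — 3 statements merged into one kernel-verified Lean document; each statement's English description precedes it below -/
import Mathlib

section
/- Let F be a field containing a primitive k-th root of unity ζ, and let t ∈ GL_n(F), t ≠ 1, be the diagonal matrix with diagonal entries ζ^{k_1}, …, ζ^{k_n} (where 0 ≤ k_i < k), having multiplicative order exactly k. Then the minimal degree M_{⟨t⟩} of invariants of the cyclic group ⟨t⟩ equals k_t := min{ a_1 + ⋯ + a_n : a_i ∈ ℕ, a_1 + ⋯ + a_n > 0, a_1 k_1 + ⋯ + a_n k_n ≡ 0 (mod k) }. -/
open MvPolynomial Matrix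

/-- The action of `g ∈ GL_n(F)` on polynomials: `(g · f)(v) = f(g⁻¹ v)`. -/
noncomputable def glAct {n : ℕ} {F : Type} [Field F] (g : GL (Fin n) F)
    (f : MvPolynomial (Fin n) F) : MvPolynomial (Fin n) F :=
  aeval (fun i => ∑ j, ((g⁻¹ : GL (Fin n) F) : Matrix (Fin n) (Fin n) F) i j • X j) f

lemma glAct_one {n : ℕ} {F : Type} [Field F] (f : MvPolynomial (Fin n) F) :
    glAct 1 f = f := by
  unfold glAct
  have h : (fun i => ∑ j, (((1 : GL (Fin n) F)⁻¹ : GL (Fin n) F) :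
      Matrix (Fin n) (Fin n) F) i j • X j) = (X : Fin n → MvPolynomial (Fin n) F) := by
    funext i
    rw [inv_one]
    rw [Finset.sum_eq_single i]
    · simp [Matrix.one_apply]
    · intro j _ hj
      simp [Matrix.one_apply, Ne.symm hj]
    · simp
  rw [h, aeval_X_left_apply]

lemma glAct_mul {n : ℕ} {F : Type} [Field F] (g h : GL (Fin n) F)
    (f : MvPolynomial (Fin n) F) : glAct (g * h) f = glAct g (glAct h f) := by
  unfold glAct
  rw [comp_aeval_apply]
  have hfun : (fun i => (aeval fun i => ∑ j, ((g⁻¹ : GL (Fin n) F) :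
        Matrix (Fin n) (Fin n) F) i j • (X j : MvPolynomial (Fin n) F))
        (∑ j, ((h⁻¹ : GL (Fin n) F) : Matrix (Fin n) (Fin n) F) i j • (X j : MvPolynomial (Fin n) F)))
      = (fun i => ∑ j, (((g * h)⁻¹ : GL (Fin n) F) :
          Matrix (Fin n) (Fin n) F) i j • (X j : MvPolynomial (Fin n) F)) := by
    funext i
    rw [map_sum]
    simp only [smul_eq_C_mul, map_sum, _root_.map_mul, aeval_C, aeval_X, algebraMap_eq,
      Finset.mul_sum]
    rw [Finset.sum_comm]
    simp only [← mul_assoc, ← _root_.map_mul, ← Finset.sum_mul]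
    refine Finset.sum_congr rfl fun l _ => ?_
    rw [_root_.mul_inv_rev, Units.val_mul, Matrix.mul_apply, map_sum, Finset.sum_mul]
  rw [hfun]

lemma glAct_inv {n : ℕ} {F : Type} [Field F] (g : GL (Fin n) F)
    (f : MvPolynomial (Fin n) F) (hf : glAct g f = f) : glAct g⁻¹ f = f := by
  conv_lhs => rw [← hf, ← glAct_mul, inv_mul_cancel, glAct_one]

lemma glAct_diag_monomial {n : ℕ} {F : Type} [Field F] (ζ : F) (hζ0 : ζ ≠ 0)
    (kv : Fin n → ℕ) (t : GL (Fin n) F)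
    (ht : (t : Matrix (Fin n) (Fin n) F) = diagonal (fun i => ζ ^ kv i))
    (a : Fin n →₀ ℕ) (c : F) :
    glAct t (monomial a c) = (ζ ^ (∑ i, a i * kv i))⁻¹ • monomial a c := by
  have hinv : ((t⁻¹ : GL (Fin n) F) : Matrix (Fin n) (Fin n) F)
      = diagonal (fun i => (ζ ^ kv i)⁻¹) := by
    have hmul : diagonal (fun i => (ζ ^ kv i)⁻¹) * (t : Matrix (Fin n) (Fin n) F) = 1 := by
      rw [ht, diagonal_mul_diagonal]
      have : (fun i => (ζ ^ kv i)⁻¹ * ζ ^ kv i) = fun _ => (1 : F) := by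
        funext i
        exact inv_mul_cancel₀ (pow_ne_zero _ hζ0)
      rw [this, diagonal_one]
    have h2 : (t : Matrix (Fin n) (Fin n) F) * ((t⁻¹ : GL (Fin n) F) :
        Matrix (Fin n) (Fin n) F) = 1 := by
      rw [← Units.val_mul, mul_inv_cancel, Units.val_one]
    calc ((t⁻¹ : GL (Fin n) F) : Matrix (Fin n) (Fin n) F)
        = (diagonal (fun i => (ζ ^ kv i)⁻¹) * (t : Matrix (Fin n) (Fin n) F)) *
          ((t⁻¹ : GL (Fin n) F) : Matrix (Fin n) (Fin n) F) := by rw [hmul, one_mul]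
      _ = diagonal (fun i => (ζ ^ kv i)⁻¹) := by rw [mul_assoc, h2, mul_one]
  unfold glAct
  rw [hinv]
  have hL : (fun i => ∑ j, diagonal (fun i => (ζ ^ kv i)⁻¹) i j • X j)
      = (fun i => C ((ζ ^ kv i)⁻¹) * X i : Fin n → MvPolynomial (Fin n) F) := by
    funext i
    rw [Finset.sum_eq_single i]
    · rw [diagonal_apply_eq, smul_eq_C_mul]
    · intro j _ hj
      rw [diagonal_apply_ne _ (Ne.symm hj), zero_smul]
    · simp
  rw [hL, aeval_monomial, monomial_eq, smul_eq_C_mul]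
  have hprod : (a.prod fun i e => (C ((ζ ^ kv i)⁻¹) * X i : MvPolynomial (Fin n) F) ^ e)
      = C ((ζ ^ (∑ i, a i * kv i))⁻¹) * a.prod fun i e => (X i : MvPolynomial (Fin n) F) ^ e := by
    have h1 : ∀ i e, (C ((ζ ^ kv i)⁻¹) * X i : MvPolynomial (Fin n) F) ^ e
        = C (((ζ ^ kv i)⁻¹) ^ e) * X i ^ e := by
      intro i e; rw [mul_pow, C_pow]
    simp only [Finsupp.prod, h1]
    rw [Finset.prod_mul_distrib, ← map_prod]
    congr 2
    have : ∀ i ∈ a.support, ((ζ ^ kv i)⁻¹) ^ a i = (ζ⁻¹) ^ (a i * kv i) := by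
      intro i _
      rw [← inv_pow, ← pow_mul, mul_comm (kv i)]
    rw [Finset.prod_congr rfl this, Finset.prod_pow_eq_pow_sum, inv_pow]
    congr 2
    apply Finset.sum_subset (Finset.subset_univ _)
    intro i _ hi
    rw [Finsupp.notMem_support_iff.mp hi, zero_mul]
  rw [hprod, algebraMap_eq]
  ring

lemma glAct_sum {n : ℕ} {F : Type} [Field F] (g : GL (Fin n) F) {ι : Type*} (s : Finset ι)
    (f : ι → MvPolynomial (Fin n) F) : glAct g (∑ i ∈ s, f i) = ∑ i ∈ s, glAct g (f i) := by
  unfold glAct; exact map_sum _ _ _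

/-- The minimal degree `M_{⟨t⟩}` of invariants of the cyclic group generated by a
diagonal matrix `t ≠ 1` of order `k` with entries `ζ^{k_i}` equals
`k_t = min{ a_1 + ⋯ + a_n > 0 : ∑ a_i k_i ≡ 0 (mod k) }`. -/
theorem stmt1 {n k : ℕ} {F : Type} [Field F] (ζ : F) (hζ : IsPrimitiveRoot ζ k)
    (kv : Fin n → ℕ) (hkv : ∀ i, kv i < k)
    (t : GL (Fin n) F) (ht1 : t ≠ 1)
    (ht : (t : Matrix (Fin n) (Fin n) F) = diagonal (fun i => ζ ^ kv i))
    (hord : orderOf t = k) :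
    IsLeast {d : ℕ | 0 < d ∧ ∃ f : MvPolynomial (Fin n) F, f ≠ 0 ∧ f.IsHomogeneous d ∧
        ∀ g ∈ Subgroup.closure {t}, glAct g f = f}
      (sInf {d : ℕ | 0 < d ∧ ∃ a : Fin n → ℕ, (∑ i, a i) = d ∧ k ∣ ∑ i, a i * kv i}) := by
  have hn : 0 < n := by
    rcases Nat.eq_zero_or_pos n with h | h
    · subst h
      exact absurd (Units.ext (by ext i j; exact i.elim0)) ht1
    · exact h
  have hk : 0 < k := lt_of_le_of_lt (Nat.zero_le _) (hkv ⟨0, hn⟩)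
  have hζ0 : ζ ≠ 0 := hζ.ne_zero hk.ne'
  set T := {d : ℕ | 0 < d ∧ ∃ a : Fin n → ℕ, (∑ i, a i) = d ∧ k ∣ ∑ i, a i * kv i} with hT
  have hTne : T.Nonempty := by
    refine ⟨n * k, Nat.mul_pos hn hk, fun _ => k, ?_, ⟨∑ i, kv i, ?_⟩⟩
    · simp [Finset.sum_const, Finset.card_univ, mul_comm]
    · rw [Finset.mul_sum]
  obtain ⟨hdpos, a, hsum, hdvd⟩ := Nat.sInf_mem hTne
  constructor
  · -- sInf T is achieved by a monomial
    refine ⟨hdpos, monomial (Finsupp.equivFunOnFinite.symm a) 1, ?_, ?_, ?_⟩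
    · simp [monomial_eq_zero]
    · apply isHomogeneous_monomial
      rw [Finsupp.degree, ← hsum]
      apply Finset.sum_subset (Finset.subset_univ _)
      intro i _ hi
      exact Finsupp.notMem_support_iff.mp hi
    · intro g hg
      induction hg using Subgroup.closure_induction with
      | mem x hx =>
        rw [Set.mem_singleton_iff] at hx
        rw [hx]
        rw [glAct_diag_monomial ζ hζ0 kv t ht]
        have : ζ ^ (∑ i, (Finsupp.equivFunOnFinite.symm a) i * kv i) = 1 := by
          have heq : (∑ i, (Finsupp.equivFunOnFinite.symm a) i * kv i) = ∑ i, a i * kv i :=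
            Finset.sum_congr rfl fun i _ => by simp
          rw [heq]
          exact (hζ.pow_eq_one_iff_dvd _).mpr hdvd
        rw [this, inv_one, one_smul]
      | one => exact glAct_one _
      | mul x y hx hy ihx ihy => rw [glAct_mul, ihy, ihx]
      | inv x hx ihx => exact glAct_inv _ _ ihx
  · -- lower bound
    rintro d' ⟨hd'pos, f, hf0, hfh, hfinv⟩
    have hts : glAct t f = f := hfinv t (Subgroup.subset_closure rfl)
    obtain ⟨b, hb⟩ := (support_nonempty (p := f)).mpr hf0
    have hcb : coeff b f ≠ 0 := mem_support_iff.mp hb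
    have key : glAct t f = ∑ c ∈ f.support, (ζ ^ (∑ i, c i * kv i))⁻¹ • monomial c (coeff c f) := by
      conv_lhs => rw [← support_sum_monomial_coeff f]
      rw [glAct_sum]
      exact Finset.sum_congr rfl fun c _ => glAct_diag_monomial ζ hζ0 kv t ht c _
    have hcoeff : coeff b f = (ζ ^ (∑ i, b i * kv i))⁻¹ * coeff b f := by
      conv_lhs => rw [← hts, key]
      rw [coeff_sum, Finset.sum_eq_single b]
      · rw [coeff_smul, coeff_monomial, if_pos rfl, smul_eq_mul]
      · intro c _ hc
        rw [coeff_smul, coeff_monomial, if_neg hc, smul_zero]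
      · intro hb'; exact absurd hb hb'
    have hone : ζ ^ (∑ i, b i * kv i) = 1 := by
      have h1 : (1 : F) * coeff b f = (ζ ^ (∑ i, b i * kv i))⁻¹ * coeff b f := by
        rw [one_mul]; exact hcoeff
      have h2 := mul_right_cancel₀ hcb h1
      exact inv_eq_one.mp h2.symm
    apply Nat.sInf_le
    refine ⟨hd'pos, fun i => b i, ?_, (hζ.pow_eq_one_iff_dvd _).mp hone⟩
    have hdeg : b.degree = d' := by
      rw [Finsupp.degree_eq_weight_one]
      exact hfh hcb
    rw [← hdeg, Finsupp.degree]
    symm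
    apply Finset.sum_subset (Finset.subset_univ _)
    intro i _ hi
    exact Finsupp.notMem_support_iff.mp hi
end

section
/- Let e, g, d, j, v_1, v_2 be positive integers with v_1, v_2 > 1, v_1 v_2 ∣ g, g ∣ e, d ∣ e, gcd(v_1, v_2) = gcd(e, j) = gcd(v_1, d) = gcd(v_2, d) = 1, d squarefree, and such that every prime divisor of e divides one of v_1, v_2 or d. Define M := min{ a_1 + a_2 : a_1, a_2 ∈ ℕ, a_1 + a_2 > 0, v_1 a_1 + j v_2 a_2 ≡ 0 (mod e), g a_1 + d g a_2 ≡ 0 (mod e) }. If j v_2 < v_1, then M = e/v_1. -/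
/-- If `jv₂ < v₁`, the minimal value `M` of `a₁ + a₂ > 0` over nonnegative solutions of
`v₁a₁ + jv₂a₂ ≡ 0 (mod e)`, `ga₁ + dga₂ ≡ 0 (mod e)` equals `e / v₁`. -/
theorem stmt10 (e g d j v₁ v₂ : ℕ)
    (he : 0 < e) (hgpos : 0 < g) (hd : 0 < d) (hj : 0 < j)
    (hv₁ : 1 < v₁) (hv₂ : 1 < v₂)
    (hv₁v₂g : v₁ * v₂ ∣ g) (hge : g ∣ e) (hde : d ∣ e)
    (h₁ : Nat.gcd v₁ v₂ = 1) (h₂ : Nat.gcd e j = 1)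
    (h₃ : Nat.gcd v₁ d = 1) (h₄ : Nat.gcd v₂ d = 1)
    (hsf : Squarefree d)
    (hprimes : ∀ p : ℕ, p.Prime → p ∣ e → p ∣ v₁ ∨ p ∣ v₂ ∨ p ∣ d)
    (hcase : j * v₂ < v₁) :
    IsLeast {m : ℕ | 0 < m ∧ ∃ a₁ a₂ : ℕ, a₁ + a₂ = m ∧
        e ∣ v₁ * a₁ + j * v₂ * a₂ ∧ e ∣ g * a₁ + d * g * a₂}
      (e / v₁) := by
  have hv₁g : v₁ ∣ g := dvd_trans (Dvd.intro v₂ rfl) hv₁v₂g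
  have hv₁e : v₁ ∣ e := hv₁g.trans hge
  have hv₁pos : 0 < v₁ := by omega
  constructor
  · refine ⟨Nat.div_pos (Nat.le_of_dvd he hv₁e) hv₁pos, e / v₁, 0, by ring, ?_, ?_⟩
    · have : v₁ * (e / v₁) = e := Nat.mul_div_cancel' hv₁e
      simp [this]
    · obtain ⟨k, hk⟩ := hv₁g
      have : g * (e / v₁) = k * e := by
        rw [hk]
        rw [mul_comm v₁ k, mul_assoc, Nat.mul_div_cancel' hv₁e]
      simp [this]
  · rintro m ⟨hm, a₁, a₂, hsum, hdvd1, _⟩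
    have hpos : 0 < v₁ * a₁ + j * v₂ * a₂ := by
      have : 0 < a₁ ∨ 0 < a₂ := by omega
      rcases this with h | h
      · exact Nat.add_pos_left (Nat.mul_pos hv₁pos h) _
      · exact Nat.add_pos_right _ (Nat.mul_pos (by positivity) h)
    have hle : e ≤ v₁ * a₁ + j * v₂ * a₂ := Nat.le_of_dvd hpos hdvd1
    have h2 : v₁ * a₁ + j * v₂ * a₂ ≤ v₁ * m := by
      subst hsum
      have : j * v₂ * a₂ ≤ v₁ * a₂ := Nat.mul_le_mul_right a₂ (le_of_lt hcase)
      nlinarith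
    calc e / v₁ ≤ (v₁ * m) / v₁ := Nat.div_le_div_right (hle.trans h2)
      _ = m := Nat.mul_div_cancel_left m hv₁pos
end

section
/- Let e, g, d, j, v_1, v_2 be positive integers with v_1, v_2 > 1, v_1 v_2 ∣ g, g ∣ e, d ∣ e, gcd(v_1, v_2) = gcd(e, j) = gcd(v_1, d) = gcd(v_2, d) = 1, d squarefree, and such that every prime divisor of e divides one of v_1, v_2 or d. Define M := min{ a_1 + a_2 : a_1, a_2 ∈ ℕ, a_1 + a_2 > 0, v_1 a_1 + j v_2 a_2 ≡ 0 (mod e), g a_1 + d g a_2 ≡ 0 (mod e) }. If j v_2 > v_1, then M = min( min_{0 < s < j} ( e·s/v_1 − ⌊ g·s/(j v_1 v_2) ⌋ · e·(v_2 j − v_1)/g ), e/v_2 ), where the inner minimum over the empty range (i.e. when j = 1) is taken to be +∞, so that M = e/v_2 when j = 1. -/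
/-!
Write `g = v₁ v₂ r` and `e = g t`. The second congruence says `t ∣ a₁ + d a₂`; together with the
first one it forces `t ∣ a₁` and `t ∣ a₂`, because `t` is coprime to the determinant
`v₁ d - j v₂` (every prime of `e` divides `v₁`, `v₂` or `d`), and then `v₁ ∣ a₂ / t`. Hence the
solutions are exactly `a₁ = v₂ t k`, `a₂ = v₁ t c` with `k + j c = r m`, of size
`t (v₂ k + v₁ c)`. As `v₁ < j v₂`, for fixed `m` the size decreases as `c` grows: for `m < j` it
is smallest at `c = ⌊r m / j⌋`, which gives the displayed values, and for `m ≥ j` it is at least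
`t v₁ r = e / v₂`, the size of the solution `m = j`, `c = r`.
-/

open Finset

theorem isCoprime_mul_sub_mul_of_prime_dvd {e j d v₁ v₂ : ℕ}
    (h₁ : Nat.Coprime v₁ v₂) (h₂ : Nat.Coprime e j) (h₄ : Nat.Coprime v₂ d)
    (hprimes : ∀ p : ℕ, p.Prime → p ∣ e → p ∣ v₁ ∨ p ∣ v₂ ∨ p ∣ d) :
    IsCoprime (e : ℤ) (v₁ * d - j * v₂) := by
  rw [Int.isCoprime_iff_nat_coprime]
  refine Nat.coprime_of_dvd fun p hp hpe hpx => ?_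
  have hp' : Prime (p : ℤ) := Nat.prime_iff_prime_int.mp hp
  have hx : (p : ℤ) ∣ v₁ * d - j * v₂ := Int.natCast_dvd.mpr hpx
  have not_coprime {a b : ℕ} (h : Nat.Coprime a b) (ha : (p : ℤ) ∣ a) (hb : (p : ℤ) ∣ b) : False :=
    Nat.not_coprime_of_dvd_of_dvd hp.one_lt (Int.natCast_dvd_natCast.mp ha)
      (Int.natCast_dvd_natCast.mp hb) h
  replace hpe : (p : ℤ) ∣ e := Int.natCast_dvd.mpr hpe
  rcases hprimes p hp (Int.natCast_dvd_natCast.mp hpe) with h | h | h <;>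
    replace h : (p : ℤ) ∣ _ := Int.natCast_dvd_natCast.mpr h
  · rcases hp'.dvd_or_dvd ((dvd_sub_right (h.mul_right d)).mp hx) with h' | h'
    exacts [not_coprime h₂ hpe h', not_coprime h₁ h h']
  · rcases hp'.dvd_or_dvd ((dvd_sub_left (h.mul_left j)).mp hx) with h' | h'
    exacts [not_coprime h₁ h' h, not_coprime h₄ h h']
  · rcases hp'.dvd_or_dvd ((dvd_sub_right (h.mul_left v₁)).mp hx) with h' | h'
    exacts [not_coprime h₂ hpe h', not_coprime h₄ h' h]

theorem dvd_and_dvd_of_isCoprime_det {R : Type*} [CommRing R] {n x y z w a b : R}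
    (hdet : IsCoprime n (x * w - y * z)) (h₁ : n ∣ x * a + y * b) (h₂ : n ∣ z * a + w * b) :
    n ∣ a ∧ n ∣ b := by
  constructor <;> refine hdet.dvd_of_dvd_mul_left ?_
  · convert dvd_sub (h₁.mul_left w) (h₂.mul_left y) using 1; ring
  · convert dvd_sub (h₂.mul_left x) (h₁.mul_left z) using 1; ring

def solutionSums (e g d j v₁ v₂ : ℕ) : Set ℕ :=
  {m | 0 < m ∧ ∃ a₁ a₂ : ℕ, a₁ + a₂ = m ∧ e ∣ v₁ * a₁ + j * v₂ * a₂ ∧ e ∣ g * a₁ + d * g * a₂}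

section Normalized

variable {d j v₁ v₂ r t : ℕ}

theorem exists_add_mul_eq_of_dvd_of_dvd {a₁ a₂ : ℕ} (he : 0 < v₁ * v₂ * r * t)
    (hdet : IsCoprime (t : ℤ) (v₁ * d - j * v₂)) (hv : Nat.Coprime v₁ (j * v₂))
    (h₁ : v₁ * v₂ * r * t ∣ v₁ * a₁ + j * v₂ * a₂)
    (h₂ : v₁ * v₂ * r * t ∣ v₁ * v₂ * r * a₁ + d * (v₁ * v₂ * r) * a₂) :
    ∃ m c k, k + j * c = r * m ∧ a₁ = v₂ * t * k ∧ a₂ = v₁ * t * c := by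
  obtain ⟨⟨⟨hv₁, hv₂⟩, hr⟩, ht⟩ : ((0 < v₁ ∧ 0 < v₂) ∧ 0 < r) ∧ 0 < t := by
    simpa only [CanonicallyOrderedAdd.mul_pos] using he
  have ht₂ : t ∣ a₁ + d * a₂ :=
    (Nat.mul_dvd_mul_iff_left (by positivity : 0 < v₁ * v₂ * r)).mp (by convert h₂ using 1; ring)
  obtain ⟨⟨b₁, rfl⟩, ⟨b₂, rfl⟩⟩ : t ∣ a₁ ∧ t ∣ a₂ := by
    have := dvd_and_dvd_of_isCoprime_det (x := (v₁ : ℤ)) (y := (j * v₂ : ℤ)) (z := 1) (w := d)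
      (a := a₁) (b := a₂) (by simpa using hdet) (by exact_mod_cast (dvd_mul_left t _).trans h₁)
      (by simpa using Int.natCast_dvd_natCast.mpr ht₂)
    exact_mod_cast this
  have hb : v₁ * v₂ * r ∣ v₁ * b₁ + j * v₂ * b₂ :=
    (Nat.mul_dvd_mul_iff_right ht).mp (by convert h₁ using 1; ring)
  obtain ⟨c, rfl⟩ : v₁ ∣ b₂ := hv.dvd_of_dvd_mul_left <| (Nat.dvd_add_right (dvd_mul_right _ _)).mp
    ((dvd_mul_of_dvd_left (dvd_mul_right v₁ v₂) r).trans hb)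
  have hb' : v₂ * r ∣ b₁ + j * v₂ * c :=
    (Nat.mul_dvd_mul_iff_left hv₁).mp (by convert hb using 1 <;> ring)
  obtain ⟨k, rfl⟩ : v₂ ∣ b₁ :=
    (Nat.dvd_add_left (Dvd.intro (j * c) (by ring))).mp ((dvd_mul_right v₂ r).trans hb')
  obtain ⟨m, hm⟩ : r ∣ k + j * c :=
    (Nat.mul_dvd_mul_iff_left hv₂).mp (by convert hb' using 1; ring)
  exact ⟨m, c, k, hm, by ring, by ring⟩

theorem mem_solutionSums_iff {n : ℕ} (he : 0 < v₁ * v₂ * r * t)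
    (hdet : IsCoprime (t : ℤ) (v₁ * d - j * v₂)) (hv : Nat.Coprime v₁ (j * v₂)) :
    n ∈ solutionSums (v₁ * v₂ * r * t) (v₁ * v₂ * r) d j v₁ v₂ ↔
      0 < n ∧ ∃ m c k, k + j * c = r * m ∧ n = t * (v₂ * k + v₁ * c) := by
  constructor
  · rintro ⟨hn, a₁, a₂, rfl, h₁, h₂⟩
    obtain ⟨m, c, k, hkc, rfl, rfl⟩ := exists_add_mul_eq_of_dvd_of_dvd he hdet hv h₁ h₂
    exact ⟨hn, m, c, k, hkc, by ring⟩
  · rintro ⟨hn, m, c, k, hkc, rfl⟩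
    refine ⟨hn, v₂ * t * k, v₁ * t * c, by ring, Dvd.intro m ?_, Dvd.intro (v₂ * k + d * v₁ * c) ?_⟩
    · calc v₁ * v₂ * r * t * m = v₁ * v₂ * t * (r * m) := by ring
        _ = _ := by rw [← hkc]; ring
    · ring

theorem pos_of_add_mul_eq (hv₁ : 0 < v₁) (hv₂ : 0 < v₂) {m c k : ℕ} (h : k + j * c = r * m)
    (hrm : 0 < r * m) : 0 < v₂ * k + v₁ * c := by
  rcases Nat.eq_zero_or_pos c with rfl | hc
  · rw [mul_zero, add_zero] at h
    subst h
    positivity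
  · exact Nat.add_pos_right _ (Nat.mul_pos hv₁ hc)

theorem add_le_add_of_add_mul_eq (hv : v₁ ≤ j * v₂) {k c k' c' : ℕ}
    (h : k + j * c = k' + j * c') (hc : c ≤ c') : v₂ * k' + v₁ * c' ≤ v₂ * k + v₁ * c := by
  obtain ⟨δ, rfl⟩ := Nat.exists_eq_add_of_le hc
  obtain rfl : k = k' + j * δ := by rw [mul_add] at h; omega
  have : v₁ * δ ≤ v₂ * (j * δ) := by nlinarith
  nlinarith

theorem le_or_exists_le_of_add_mul_eq (hv : v₁ ≤ j * v₂) (hj : 0 < j) {m c k : ℕ}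
    (h : k + j * c = r * m) (hpos : 0 < v₂ * k + v₁ * c) :
    v₁ * r ≤ v₂ * k + v₁ * c ∨
      ∃ s ∈ Ioo 0 j, v₂ * (r * s % j) + v₁ * (r * s / j) ≤ v₂ * k + v₁ * c := by
  rcases Nat.lt_or_ge m j with hmj | hjm
  · right
    have hm : 0 < m := by
      rcases Nat.eq_zero_or_pos m with rfl | hm
      · obtain ⟨rfl, hc⟩ : k = 0 ∧ (j = 0 ∨ c = 0) := by simpa using h
        obtain rfl : c = 0 := hc.resolve_left hj.ne'
        simp at hpos
      · exact hm
    have hc : c ≤ r * m / j := (Nat.le_div_iff_mul_le hj).mpr (by rw [← h]; nlinarith)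
    exact ⟨m, mem_Ioo.mpr ⟨hm, hmj⟩,
      add_le_add_of_add_mul_eq hv (by rw [h, Nat.mod_add_div]) hc⟩
  · left
    rcases le_total c r with hcr | hrc
    · have hjr : j * r ≤ k + j * c := by rw [h, mul_comm]; exact Nat.mul_le_mul_left r hjm
      have := add_le_add_of_add_mul_eq hv (show k + j * c = k + j * c - j * r + j * r by omega) hcr
      omega
    · exact (Nat.mul_le_mul_left v₁ hrc).trans (Nat.le_add_left _ _)

theorem natCast_sub_mul_eq_mul_mod_add_div (hv₁ : 0 < v₁) (hv₂ : 0 < v₂) (hr : 0 < r)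
    (hv : v₁ ≤ v₂ * j) (s : ℕ) :
    (((v₁ * v₂ * r * t / v₁ * s : ℕ) : ℤ) - ((v₁ * v₂ * r * s / (j * v₁ * v₂) : ℕ) : ℤ) *
        ((v₁ * v₂ * r * t * (v₂ * j - v₁) / (v₁ * v₂ * r) : ℕ) : ℤ)) =
      ((t * (v₂ * (r * s % j) + v₁ * (r * s / j)) : ℕ) : ℤ) := by
  rw [Nat.div_eq_of_eq_mul_left hv₁ (by ring : v₁ * v₂ * r * t = v₂ * r * t * v₁),
    Nat.div_eq_of_eq_mul_left (by positivity) (by ring :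
      v₁ * v₂ * r * t * (v₂ * j - v₁) = t * (v₂ * j - v₁) * (v₁ * v₂ * r)),
    show v₁ * v₂ * r * s = r * s * (v₁ * v₂) by ring, show j * v₁ * v₂ = j * (v₁ * v₂) by ring,
    Nat.mul_div_mul_right _ _ (by positivity)]
  have hdiv : ((r * s % j : ℕ) : ℤ) + j * (r * s / j : ℕ) = r * s := by
    exact_mod_cast Nat.mod_add_div (r * s) j
  generalize r * s % j = ρ, r * s / j = q at hdiv ⊢
  push_cast [hv]
  linear_combination (-(v₂ : ℤ) * t) * hdiv

end Normalized

theorem coe_eq_min_inf_of_isLeast {S : Set ℕ} {M q : ℕ} {I : Finset ℕ} {f : ℕ → ℕ}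
    (hM : IsLeast S M) (hq : q ∈ S) (hf : ∀ s ∈ I, f s ∈ S)
    (hS : ∀ n ∈ S, q ≤ n ∨ ∃ s ∈ I, f s ≤ n) :
    ((M : ℤ) : WithTop ℤ) = min (I.inf fun s => ((f s : ℤ) : WithTop ℤ)) ((q : ℤ) : WithTop ℤ) := by
  refine le_antisymm (le_min (Finset.le_inf fun s hs => ?_) ?_) ?_
  · exact WithTop.coe_le_coe.mpr (Int.ofNat_le.mpr (hM.2 (hf s hs)))
  · exact WithTop.coe_le_coe.mpr (Int.ofNat_le.mpr (hM.2 hq))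
  · rcases hS M hM.1 with h | ⟨s, hs, h⟩
    · exact (min_le_right _ _).trans (WithTop.coe_le_coe.mpr (Int.ofNat_le.mpr h))
    · exact (min_le_left _ _).trans
        ((Finset.inf_le hs).trans (WithTop.coe_le_coe.mpr (Int.ofNat_le.mpr h)))

theorem stmt11_general (e g d j v₁ v₂ : ℕ)
    (he : 0 < e)
    (hv₁v₂g : v₁ * v₂ ∣ g) (hge : g ∣ e)
    (h₁ : Nat.gcd v₁ v₂ = 1) (h₂ : Nat.gcd e j = 1)
    (h₄ : Nat.gcd v₂ d = 1)
    (hprimes : ∀ p : ℕ, p.Prime → p ∣ e → p ∣ v₁ ∨ p ∣ v₂ ∨ p ∣ d)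
    (hcase : v₁ < j * v₂)
    (M : ℕ)
    (hM : IsLeast {m : ℕ | 0 < m ∧ ∃ a₁ a₂ : ℕ, a₁ + a₂ = m ∧
        e ∣ v₁ * a₁ + j * v₂ * a₂ ∧ e ∣ g * a₁ + d * g * a₂} M) :
    ((M : ℤ) : WithTop ℤ) =
      min
        ((Finset.Ioo 0 j).inf (fun s =>
          ((((e / v₁ * s : ℕ) : ℤ) -
            ((g * s / (j * v₁ * v₂) : ℕ) : ℤ) * ((e * (v₂ * j - v₁) / g : ℕ) : ℤ) : ℤ) :
            WithTop ℤ)))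
        (((e / v₂ : ℕ) : ℤ) : WithTop ℤ) := by
  obtain ⟨r, rfl⟩ := hv₁v₂g
  obtain ⟨t, rfl⟩ := hge
  obtain ⟨⟨⟨hv₁, hv₂⟩, hr⟩, ht⟩ : ((0 < v₁ ∧ 0 < v₂) ∧ 0 < r) ∧ 0 < t := by
    simpa only [CanonicallyOrderedAdd.mul_pos] using he
  have hj : 0 < j := Nat.pos_of_ne_zero (by rintro rfl; simp at hcase)
  have hdet : IsCoprime (t : ℤ) (v₁ * d - j * v₂) :=
    (isCoprime_mul_sub_mul_of_prime_dvd h₁ h₂ h₄ hprimes).of_isCoprime_of_dvd_left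
      (by push_cast; exact dvd_mul_left _ _)
  have hv : Nat.Coprime v₁ (j * v₂) :=
    (Nat.Coprime.coprime_dvd_left (Dvd.intro (v₂ * r * t) (by ring)) h₂).mul_right h₁
  have hq : v₁ * v₂ * r * t / v₂ = t * (v₁ * r) := Nat.div_eq_of_eq_mul_left hv₂ (by ring)
  simp only [natCast_sub_mul_eq_mul_mod_add_div hv₁ hv₂ hr (by linarith : v₁ ≤ v₂ * j), hq]
  refine coe_eq_min_inf_of_isLeast (S := solutionSums _ _ d j v₁ v₂) hM ?_ ?_ ?_ <;>
    simp only [mem_solutionSums_iff he hdet hv]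
  · exact ⟨by positivity, j, r, 0, by ring, by ring⟩
  · intro s hs
    have hrs := Nat.mod_add_div (r * s) j
    exact ⟨Nat.mul_pos ht (pos_of_add_mul_eq hv₁ hv₂ hrs (Nat.mul_pos hr (mem_Ioo.mp hs).1)),
      s, _, _, hrs, rfl⟩
  · rintro n ⟨hn, m, c, k, hkc, rfl⟩
    exact (le_or_exists_le_of_add_mul_eq (by linarith) hj hkc (Nat.pos_of_mul_pos_left hn)).imp
      (Nat.mul_le_mul_left t) (Exists.imp fun _ => And.imp_right (Nat.mul_le_mul_left t))

/-- If `jv₂ > v₁`, the minimal value `M` of `a₁ + a₂ > 0` over nonnegative solutions of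
`v₁a₁ + jv₂a₂ ≡ 0 (mod e)`, `ga₁ + dga₂ ≡ 0 (mod e)` equals
`min( min_{0<s<j} ( es/v₁ − ⌊gs/(jv₁v₂)⌋·e(v₂j−v₁)/g ), e/v₂ )`, where the inner
minimum over an empty range (`j = 1`) is `+∞` (so that `M = e/v₂` when `j = 1`). -/
theorem stmt11 (e g d j v₁ v₂ : ℕ)
    (he : 0 < e) (hgpos : 0 < g) (hd : 0 < d) (hj : 0 < j)
    (hv₁ : 1 < v₁) (hv₂ : 1 < v₂)
    (hv₁v₂g : v₁ * v₂ ∣ g) (hge : g ∣ e) (hde : d ∣ e)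
    (h₁ : Nat.gcd v₁ v₂ = 1) (h₂ : Nat.gcd e j = 1)
    (h₃ : Nat.gcd v₁ d = 1) (h₄ : Nat.gcd v₂ d = 1)
    (hsf : Squarefree d)
    (hprimes : ∀ p : ℕ, p.Prime → p ∣ e → p ∣ v₁ ∨ p ∣ v₂ ∨ p ∣ d)
    (hcase : v₁ < j * v₂)
    (M : ℕ)
    (hM : IsLeast {m : ℕ | 0 < m ∧ ∃ a₁ a₂ : ℕ, a₁ + a₂ = m ∧
        e ∣ v₁ * a₁ + j * v₂ * a₂ ∧ e ∣ g * a₁ + d * g * a₂} M) :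
    ((M : ℤ) : WithTop ℤ) =
      min
        ((Finset.Ioo 0 j).inf (fun s =>
          ((((e / v₁ * s : ℕ) : ℤ) -
            ((g * s / (j * v₁ * v₂) : ℕ) : ℤ) * ((e * (v₂ * j - v₁) / g : ℕ) : ℤ) : ℤ) :
            WithTop ℤ)))
        (((e / v₂ : ℕ) : ℤ) : WithTop ℤ) :=
  stmt11_general e g d j v₁ v₂ he hv₁v₂g hge h₁ h₂ h₄ hprimes hcase M hM
end
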